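/- For any l ∈ ℝ and t > 0 with |l| ≤ t, and X a standard Gaussian random variable, E[|l + tX| - |l|] ≥ √(2/π)·t·e^{-1/2} - 2t·(1 - Φ(1)) ≥ 0.1666·t. -/

import Mathlib

/-!
Since `a ↦ |a + y| - a` is antitone, `E[||l| + tX| - |l|]` only decreases when `|l|` is
raised to `t`, and by the symmetry of `X` it equals `E[|l + tX| - |l|]`. At `|l| = t` the
expectation is `t (E|1 + X| - 1) = 2t E[(X - 1)⁺] = 2t (φ(1) - (1 - Φ(1)))`, because
`∫_c^∞ x φ(x) dx = φ(c)`. The numerical bound uses `Φ(1) = 1/2 + ∫₀¹ φ` and the alternating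
Taylor bound for `exp (-y)`.
-/

open MeasureTheory ProbabilityTheory Real

/-- Standard Gaussian cumulative distribution function. -/
noncomputable def Phi (t : ℝ) : ℝ := ∫ x in Set.Iic t, Real.exp (-x ^ 2 / 2) / Real.sqrt (2 * Real.pi)

open Set Filter Topology

lemma gaussianPDFReal_zero_one (x : ℝ) :
    gaussianPDFReal 0 1 x = exp (-x ^ 2 / 2) / √(2 * π) := by
  simp [gaussianPDFReal, div_eq_inv_mul]

lemma hasDerivAt_gaussianPDFReal (x : ℝ) :
    HasDerivAt (gaussianPDFReal 0 1) (-x * gaussianPDFReal 0 1 x) x := by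
  rw [funext gaussianPDFReal_zero_one]
  have h : HasDerivAt (fun y : ℝ => -y ^ 2 / 2) (-x) x :=
    ((hasDerivAt_pow 2 x).fun_neg.div_const 2).congr_deriv (by ring)
  exact (h.exp.div_const (√(2 * π))).congr_deriv (by ring)

lemma integrable_mul_gaussianPDFReal : Integrable fun x => x * gaussianPDFReal 0 1 x := by
  refine ((integrable_mul_exp_neg_mul_sq (b := 1 / 2) (by norm_num)).div_const (√(2 * π))).congr
    (ae_of_all _ fun x => ?_)
  simp only [gaussianPDFReal_zero_one]
  rw [show -(1 / 2) * x ^ 2 = -x ^ 2 / 2 by ring]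
  ring

lemma integral_Ioi_mul_gaussianPDFReal (c : ℝ) :
    ∫ x in Ioi c, x * gaussianPDFReal 0 1 x = gaussianPDFReal 0 1 c := by
  have hderiv (x : ℝ) :
      HasDerivAt (fun y => -gaussianPDFReal 0 1 y) (x * gaussianPDFReal 0 1 x) x :=
    (hasDerivAt_gaussianPDFReal x).fun_neg.congr_deriv (by ring)
  have hlim : Tendsto (fun y => -gaussianPDFReal 0 1 y) atTop (𝓝 0) :=
    tendsto_zero_of_hasDerivAt_of_integrableOn_Ioi (a := c) (fun x _ => hderiv x)
      integrable_mul_gaussianPDFReal.integrableOn (integrable_gaussianPDFReal 0 1).neg.integrableOn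
  simpa using integral_Ioi_of_hasDerivAt_of_tendsto' (fun x _ => hderiv x)
    integrable_mul_gaussianPDFReal.integrableOn hlim

lemma Phi_eq_integral (c : ℝ) : Phi c = ∫ x in Iic c, gaussianPDFReal 0 1 x := by
  simp only [gaussianPDFReal_zero_one, Phi]

lemma integral_Ioi_gaussianPDFReal (c : ℝ) :
    ∫ x in Ioi c, gaussianPDFReal 0 1 x = 1 - Phi c := by
  rw [Phi_eq_integral, ← integral_gaussianPDFReal_eq_one 0 one_ne_zero,
    ← intervalIntegral.integral_Iic_add_Ioi (integrable_gaussianPDFReal 0 1).integrableOn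
      (integrable_gaussianPDFReal 0 1).integrableOn]
  ring

lemma Phi_zero : Phi 0 = 1 / 2 := by
  have h := integral_comp_neg_Iic 0 (gaussianPDFReal 0 1)
  rw [neg_zero, integral_Ioi_gaussianPDFReal] at h
  simp only [gaussianPDFReal_zero_one, neg_sq] at h
  change Phi 0 = 1 - Phi 0 at h
  linarith

lemma integrable_fun_id_gaussianReal (μ : ℝ) (v : NNReal) :
    Integrable (fun x => x) (gaussianReal μ v) :=
  (memLp_id_gaussianReal 1).integrable le_rfl

lemma integral_comp_neg_gaussianReal {E : Type*} [NormedAddCommGroup E] [NormedSpace ℝ E]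
    (v : NNReal) (F : ℝ → E) :
    ∫ x, F (-x) ∂gaussianReal 0 v = ∫ x, F x ∂gaussianReal 0 v := by
  conv_rhs => rw [← neg_zero, ← gaussianReal_map_neg]
  exact (integral_map_equiv (MeasurableEquiv.neg ℝ) F).symm

lemma integral_max_sub_gaussianReal (c : ℝ) :
    ∫ x, max (x - c) 0 ∂gaussianReal 0 1 = gaussianPDFReal 0 1 c - c * (1 - Phi c) := by
  have hpos : ∀ x, gaussianPDFReal 0 1 x * max (x - c) 0 =
      (Ioi c).indicator (fun x => x * gaussianPDFReal 0 1 x - c * gaussianPDFReal 0 1 x) x := by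
    intro x
    by_cases hx : x ∈ Ioi c
    · rw [indicator_of_mem hx, max_eq_left (sub_nonneg.2 (le_of_lt hx))]; ring
    · rw [indicator_of_notMem hx, max_eq_right (by simpa using hx), mul_zero]
  simp_rw [integral_gaussianReal_eq_integral_smul one_ne_zero, smul_eq_mul, hpos,
    integral_indicator measurableSet_Ioi]
  rw [integral_sub integrable_mul_gaussianPDFReal.integrableOn
      ((integrable_gaussianPDFReal 0 1).const_mul c).integrableOn,
    integral_const_mul, integral_Ioi_mul_gaussianPDFReal, integral_Ioi_gaussianPDFReal]

lemma integral_abs_add_gaussianReal_sub (c : ℝ) :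
    ∫ x, |c + x| ∂gaussianReal 0 1 - c = 2 * (gaussianPDFReal 0 1 c - c * (1 - Phi c)) := by
  have hpart : ∀ x : ℝ, max (-x - c) 0 = (|c + x| - (c + x)) / 2 := by
    intro x
    rcases le_total 0 (c + x) with h | h
    · rw [abs_of_nonneg h, max_eq_right (by linarith)]; ring
    · rw [abs_of_nonpos h, max_eq_left (by linarith)]; ring
  have hint : Integrable (fun x => c + x) (gaussianReal 0 1) :=
    (integrable_const c).add (integrable_fun_id_gaussianReal 0 1)
  have hmean : ∫ x, (c + x) ∂gaussianReal 0 1 = c := by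
    rw [integral_add (integrable_const c) (integrable_fun_id_gaussianReal 0 1),
      integral_id_gaussianReal]
    simp
  rw [← integral_max_sub_gaussianReal,
    ← integral_comp_neg_gaussianReal 1 (fun x => max (x - c) 0)]
  simp_rw [hpart]
  rw [integral_div, integral_sub hint.abs hint, hmean]
  ring

lemma antitone_abs_add_sub (y : ℝ) : Antitone fun a : ℝ => |a + y| - a := by
  intro a b hab
  have := abs_add_le (a + y) (b - a)
  rw [show a + y + (b - a) = b + y by ring, abs_of_nonneg (sub_nonneg.2 hab)] at this
  simp only
  linarith

lemma le_integral_abs_add_mul_gaussianReal_sub {l t : ℝ} (hl : |l| ≤ t) :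
    t * (∫ x, |1 + x| ∂gaussianReal 0 1 - 1) ≤ ∫ x, (|l + t * x| - |l|) ∂gaussianReal 0 1 := by
  have ht : 0 ≤ t := (abs_nonneg l).trans hl
  have hint (a s : ℝ) : Integrable (fun x => |a + s * x| - a) (gaussianReal 0 1) :=
    ((integrable_const a).add ((integrable_fun_id_gaussianReal 0 1).const_mul s)).abs.sub
      (integrable_const a)
  have hsymm : ∫ x, (|l + t * x| - |l|) ∂gaussianReal 0 1 =
      ∫ x, (|(|l|) + t * x| - |l|) ∂gaussianReal 0 1 := by
    rcases le_total 0 l with h | h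
    · rw [abs_of_nonneg h]
    · rw [← integral_comp_neg_gaussianReal 1 (fun x => |(|l|) + t * x| - |l|), abs_of_nonpos h]
      congr 1 with x
      rw [← abs_neg (l + t * x)]
      ring_nf
  have hscale : ∫ x, (|t + t * x| - t) ∂gaussianReal 0 1 =
      t * (∫ x, |1 + x| ∂gaussianReal 0 1 - 1) := by
    have h (x : ℝ) : |t + t * x| - t = t * (|1 + x| - 1) := by
      rw [show t + t * x = t * (1 + x) by ring, abs_mul, abs_of_nonneg ht]; ring
    simp_rw [h]
    rw [integral_const_mul, integral_sub ?_ (integrable_const 1)]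
    · simp
    · exact ((integrable_const 1).add (integrable_fun_id_gaussianReal 0 1)).abs
  rw [hsymm, ← hscale]
  exact integral_mono (hint t t) (hint |l| t) fun x => antitone_abs_add_sub (t * x) hl

lemma exp_neg_taylor_lower_bound {y : ℝ} (h0 : 0 ≤ y) (h1 : y ≤ 1) :
    1 - y + y ^ 2 / 2 - y ^ 3 / 6 + y ^ 4 / 24 - y ^ 5 / 100 ≤ exp (-y) := by
  have h := Real.exp_bound (x := -y) (by rwa [abs_neg, abs_of_nonneg h0]) (n := 5) (by norm_num)
  simp only [Finset.sum_range_succ, Finset.sum_range_zero, abs_neg, abs_of_nonneg h0,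
    Nat.factorial] at h
  norm_num at h
  linarith [(abs_le.1 h).1]

lemma integral_exp_neg_sq_div_two_gt : 0.8556 < ∫ x in (0 : ℝ)..1, exp (-x ^ 2 / 2) := by
  have hle : ∀ x ∈ Icc (0 : ℝ) 1, 1 - x ^ 2 / 2 + x ^ 4 / 8 - x ^ 6 / 48 + x ^ 8 / 384
      - x ^ 10 / 3200 ≤ exp (-x ^ 2 / 2) := by
    rintro x ⟨h0, h1⟩
    rw [neg_div]
    convert exp_neg_taylor_lower_bound (y := x ^ 2 / 2) (by positivity) (by nlinarith) using 1
    ring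
  have hmono := intervalIntegral.integral_mono_on (μ := volume) zero_le_one
    ((by fun_prop : Continuous _).intervalIntegrable 0 1)
    ((by fun_prop : Continuous _).intervalIntegrable 0 1) hle
  have hpoly : ∫ x in (0 : ℝ)..1, (1 - x ^ 2 / 2 + x ^ 4 / 8 - x ^ 6 / 48 + x ^ 8 / 384
      - x ^ 10 / 3200) = 177883 / 207900 := by
    norm_num (maxDischargeDepth := 8) [intervalIntegral.integral_sub, intervalIntegral.integral_add,
      intervalIntegral.integral_div, integral_pow, IntervalIntegrable.add, IntervalIntegrable.sub,
      intervalIntegral.intervalIntegrable_pow, IntervalIntegrable.div_const]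
  linarith

lemma exp_neg_half_gt : 0.60652 < exp (-1 / 2) := by
  have h : exp (-1 / 2) ^ 2 * exp 1 = 1 := by
    rw [← exp_nat_mul, ← exp_add]; norm_num
  nlinarith [exp_one_lt_d9, exp_pos (-1 / 2), exp_pos 1]

lemma sqrt_two_mul_pi_lt : √(2 * π) < 2.50663 := by
  rw [sqrt_lt' (by norm_num)]
  nlinarith [pi_lt_d6]

lemma Phi_one_eq : Phi 1 = 1 / 2 + (∫ x in (0 : ℝ)..1, exp (-x ^ 2 / 2)) / √(2 * π) := by
  have h := intervalIntegral.integral_Iic_sub_Iic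
    ((integrable_gaussianPDFReal 0 1).integrableOn (s := Iic 0))
    ((integrable_gaussianPDFReal 0 1).integrableOn (s := Iic 1))
  rw [← Phi_eq_integral, ← Phi_eq_integral, Phi_zero] at h
  simp only [gaussianPDFReal_zero_one, intervalIntegral.integral_div] at h
  linarith

lemma sqrt_two_div_pi_mul_exp_neg_half :
    √(2 / π) * exp (-1 / 2) = 2 * gaussianPDFReal 0 1 1 := by
  have h : √(2 / π) * √(2 * π) = 2 := by
    rw [← sqrt_mul (by positivity), show 2 / π * (2 * π) = 2 ^ 2 by field_simp,
      sqrt_sq zero_le_two]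
  rw [gaussianPDFReal_zero_one]
  field_simp
  exact h

lemma le_sqrt_two_div_pi_mul_exp_neg_half_sub :
    0.1666 ≤ √(2 / π) * exp (-1 / 2) - 2 * (1 - Phi 1) := by
  set S := √(2 * π)
  set I := ∫ x in (0 : ℝ)..1, exp (-x ^ 2 / 2)
  have hS : 0 < S := by positivity
  have key : 0.1666 * S ≤ 2 * exp (-1 / 2) - S + 2 * I := by
    linarith [exp_neg_half_gt, sqrt_two_mul_pi_lt, integral_exp_neg_sq_div_two_gt]
  rw [sqrt_two_div_pi_mul_exp_neg_half, gaussianPDFReal_zero_one, Phi_one_eq,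
    show -(1 : ℝ) ^ 2 / 2 = -1 / 2 by norm_num,
    show 2 * (exp (-1 / 2) / S) - 2 * (1 - (1 / 2 + I / S)) = (2 * exp (-1 / 2) - S + 2 * I) / S by
      field_simp; ring,
    le_div_iff₀ hS]
  exact key

theorem stmt_2_general (t l : ℝ) (hl : |l| ≤ t) :
    (∫ x, (|l + t * x| - |l|) ∂(gaussianReal 0 1)) ≥
        Real.sqrt (2 / Real.pi) * t * Real.exp (-(1 : ℝ) / 2) - 2 * t * (1 - Phi 1) ∧
      Real.sqrt (2 / Real.pi) * t * Real.exp (-(1 : ℝ) / 2) - 2 * t * (1 - Phi 1) ≥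
        0.1666 * t := by
  have ht : 0 ≤ t := (abs_nonneg l).trans hl
  have hvalue : Real.sqrt (2 / Real.pi) * t * Real.exp (-(1 : ℝ) / 2) - 2 * t * (1 - Phi 1) =
      t * (∫ x, |1 + x| ∂gaussianReal 0 1 - 1) := by
    rw [integral_abs_add_gaussianReal_sub]
    linear_combination t * sqrt_two_div_pi_mul_exp_neg_half
  constructor
  · rw [ge_iff_le, hvalue]
    exact le_integral_abs_add_mul_gaussianReal_sub hl
  · linarith [mul_le_mul_of_nonneg_left le_sqrt_two_div_pi_mul_exp_neg_half_sub ht]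

theorem stmt_2 (t l : ℝ) (ht : 0 < t) (hl : |l| ≤ t) :
    (∫ x, (|l + t * x| - |l|) ∂(gaussianReal 0 1)) ≥
        Real.sqrt (2 / Real.pi) * t * Real.exp (-(1 : ℝ) / 2) - 2 * t * (1 - Phi 1) ∧
      Real.sqrt (2 / Real.pi) * t * Real.exp (-(1 : ℝ) / 2) - 2 * t * (1 - Phi 1) ≥
        0.1666 * t :=
  stmt_2_general t l hl
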